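/- Fix d ≥ 1, a configuration ω : ℤ^d × ℕ → Prop, and an integer r ≥ 1. If there exist n ∈ ℕ and x ∈ ℤ^d such that x is wet at level n but x is not r-wet at level n, then there exist m ∈ ℕ and y ∈ ℤ^d with ‖y‖_∞ = r such that y is r-wet at level m. (This is the deterministic coupling claim between restricted and unrestricted oriented percolation used in the proof of Lemma 4: if the restricted set of wet sites ever differs from the unrestricted one, then the restricted process must reach the boundary of the box.) -/

import Mathlib

/-- `z` is an `ω`-open path from the origin to `(x, n)`: a nearest-neighbor sequence
`z 0 = 0, …, z n = x` all of whose sites `(z i, i)` are open. -/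
def IsOpenPath (d : ℕ) (ω : (Fin d → ℤ) → ℕ → Prop)
    (z : ℕ → Fin d → ℤ) (x : Fin d → ℤ) (n : ℕ) : Prop :=
  z 0 = 0 ∧ z n = x ∧ (∀ i < n, (∑ j, |z (i + 1) j - z i j|) = 1) ∧ ∀ i ≤ n, ω (z i) i

/-- `x` is wet at level `n`: there is an `ω`-open path to `(x, n)`. -/
def Wet (d : ℕ) (ω : (Fin d → ℤ) → ℕ → Prop) (x : Fin d → ℤ) (n : ℕ) : Prop :=
  ∃ z, IsOpenPath d ω z x n

/-- `x` is `r`-wet at level `n`: there is an `ω`-open path to `(x, n)` all of whose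
sites satisfy `‖z i‖_∞ ≤ r`. -/
def RWet (d : ℕ) (ω : (Fin d → ℤ) → ℕ → Prop) (r : ℕ) (x : Fin d → ℤ) (n : ℕ) : Prop :=
  ∃ z, IsOpenPath d ω z x n ∧ ∀ i ≤ n, ∀ j, |z i j| ≤ (r : ℤ)

/-!
Follow an open path to a site that is wet but not `r`-wet: it starts at the origin, inside
the box `‖·‖_∞ ≤ r`, and must leave it. Since each step changes every coordinate by at most
one, the last site before the first exit lies on the boundary of the box, and the prefix of
the path up to that site is an open path inside the box.
-/

theorem IsOpenPath.abs_step_le_one {d : ℕ} {ω : (Fin d → ℤ) → ℕ → Prop}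
    {z : ℕ → Fin d → ℤ} {x : Fin d → ℤ} {n : ℕ} (hz : IsOpenPath d ω z x n)
    {i : ℕ} (hi : i < n) (j : Fin d) : |z (i + 1) j - z i j| ≤ 1 :=
  hz.2.2.1 i hi ▸ Finset.single_le_sum (f := fun j => |z (i + 1) j - z i j|)
    (fun _ _ => abs_nonneg _) (Finset.mem_univ j)

theorem IsOpenPath.prefix {d : ℕ} {ω : (Fin d → ℤ) → ℕ → Prop}
    {z : ℕ → Fin d → ℤ} {x : Fin d → ℤ} {n : ℕ} (hz : IsOpenPath d ω z x n)
    {m : ℕ} (hm : m ≤ n) : IsOpenPath d ω z (z m) m :=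
  ⟨hz.1, rfl, fun i hi => hz.2.2.1 i (by omega), fun i hi => hz.2.2.2 i (by omega)⟩

theorem exists_boundary_before_exit {d : ℕ} {z : ℕ → Fin d → ℤ} {n : ℕ} {r : ℤ}
    (hr : 0 ≤ r) (hz0 : z 0 = 0) (hstep : ∀ i < n, ∀ j, |z (i + 1) j - z i j| ≤ 1)
    (hexit : ∃ k ≤ n, ∃ j, r < |z k j|) :
    ∃ m < n, (∀ i ≤ m, ∀ j, |z i j| ≤ r) ∧ ∃ j, |z m j| = r := by
  classical
  obtain ⟨hkn, j, hj⟩ := Nat.find_spec hexit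
  have hinside : ∀ i < Nat.find hexit, ∀ j, |z i j| ≤ r := by
    intro i hi j
    by_contra hout
    exact Nat.find_min hexit hi ⟨by omega, j, not_le.mp hout⟩
  obtain ⟨m, hm⟩ : ∃ m, Nat.find hexit = m + 1 := by
    refine Nat.exists_eq_succ_of_ne_zero fun h0 => ?_
    rw [h0, hz0] at hj
    simp only [Pi.zero_apply, abs_zero] at hj
    omega
  rw [hm] at hkn hj hinside
  have hjump := hstep m (by omega) j
  have hmj := hinside m m.lt_succ_self j
  refine ⟨m, by omega, fun i hi => hinside i (by omega), j, ?_⟩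
  have := abs_sub_abs_le_abs_sub (z (m + 1) j) (z m j)
  omega

theorem restricted_percolation_reaches_boundary_general (d : ℕ)
    (ω : (Fin d → ℤ) → ℕ → Prop) (r : ℕ)
    (h : ∃ (n : ℕ) (x : Fin d → ℤ), Wet d ω x n ∧ ¬ RWet d ω r x n) :
    ∃ (m : ℕ) (y : Fin d → ℤ),
      ((∀ j, |y j| ≤ (r : ℤ)) ∧ (∃ j, |y j| = (r : ℤ))) ∧ RWet d ω r y m := by
  obtain ⟨n, x, ⟨z, hz⟩, hnot⟩ := h
  have hexit : ∃ k ≤ n, ∃ j, (r : ℤ) < |z k j| := by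
    by_contra! hinside
    exact hnot ⟨z, hz, hinside⟩
  obtain ⟨m, hmn, hinside, hboundary⟩ := exists_boundary_before_exit (Int.natCast_nonneg r)
    hz.1 (fun i hi => hz.abs_step_le_one hi) hexit
  exact ⟨m, z m, ⟨hinside m le_rfl, hboundary⟩, z, hz.prefix hmn.le, hinside⟩

/-- Coupling of restricted and unrestricted oriented percolation: if some site is wet
but not `r`-wet at some level, then the restricted process reaches the boundary of the
box, i.e. some site `y` with `‖y‖_∞ = r` is `r`-wet at some level `m`. -/
theorem restricted_percolation_reaches_boundary (d : ℕ) (hd : 1 ≤ d)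
    (ω : (Fin d → ℤ) → ℕ → Prop) (r : ℕ) (hr : 1 ≤ r)
    (h : ∃ (n : ℕ) (x : Fin d → ℤ), Wet d ω x n ∧ ¬ RWet d ω r x n) :
    ∃ (m : ℕ) (y : Fin d → ℤ),
      ((∀ j, |y j| ≤ (r : ℤ)) ∧ (∃ j, |y j| = (r : ℤ))) ∧ RWet d ω r y m :=
  restricted_percolation_reaches_boundary_general d ω r h
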